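/- Let B_1 and B_2 be bases of a matroid M. Then for every subset A_1 ⊆ B_1 there exists a subset A_2 ⊆ B_2 such that both (B_1 \ A_1) ∪ A_2 and (B_2 \ A_2) ∪ A_1 are bases of M. (Multiple symmetric exchange property.) -/

import Mathlib

/-!
Write `F = B₁ \ A₁` and `r` for the rank function. For every `X ⊆ B₂`, submodularity gives
`r (A₁ ∪ X) + r (F ∪ X) ≥ r B₁ + r X = |B₁| + |X|`. Adding the elements of `B₂` one at a time to
whichever side keeps an inequality of this shape valid splits `B₂ = C ⊔ A₂` with
`r (A₁ ∪ C) + r (F ∪ A₂) ≥ |B₁| + |B₂|`; if at some stage neither side works, submodularity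
applied to the two failing sets contradicts the inequality. Since both sides have rank at most
`|B₁|` and together at most `|B₁| + |B₂|` elements, both are independent of size `|B₁|`.
-/

open Set

section

variable {α : Type*}

def IsSubmodular (f : Set α → ℕ) : Prop :=
  ∀ X Y, f (X ∩ Y) + f (X ∪ Y) ≤ f X + f Y

namespace IsSubmodular

variable {f g h : Set α → ℕ}

lemma comp_union_left (hf : IsSubmodular f) (A : Set α) : IsSubmodular fun X ↦ f (A ∪ X) :=
  fun X Y ↦ by
    beta_reduce
    rw [union_inter_distrib_left, union_union_distrib_left]
    exact hf (A ∪ X) (A ∪ Y)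

lemma comp_insert (hf : IsSubmodular f) (e : α) : IsSubmodular fun X ↦ f (insert e X) :=
  fun X Y ↦ by
    beta_reduce
    rw [insert_inter_distrib, insert_union_distrib]
    exact hf (insert e X) (insert e Y)

lemma forall_le_insert_left_or_right (hg : IsSubmodular g) (hh : IsSubmodular h) {S : Set α}
    {e : α} {k : ℕ} (hS : S.Finite) (he : e ∉ S)
    (H : ∀ X ⊆ insert e S, k + X.ncard ≤ g X + h X) :
    (∀ X ⊆ S, k + 1 + X.ncard ≤ g (insert e X) + h X) ∨
      ∀ X ⊆ S, k + 1 + X.ncard ≤ g X + h (insert e X) := by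
  by_contra! hfail
  obtain ⟨⟨X₁, hX₁S, hX₁⟩, ⟨X₂, hX₂S, hX₂⟩⟩ := hfail
  have he₁ : e ∉ X₁ := fun heX ↦ he (hX₁S heX)
  have he₂ : e ∉ X₂ := fun heX ↦ he (hX₂S heX)
  have hg₁₂ := hg (insert e X₁) X₂
  rw [insert_inter_of_notMem he₂, insert_union] at hg₁₂
  have hh₁₂ := hh X₁ (insert e X₂)
  rw [inter_insert_of_notMem he₁, union_insert] at hh₁₂
  have hunion := H (insert e (X₁ ∪ X₂)) (insert_subset_insert (union_subset hX₁S hX₂S))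
  rw [ncard_insert_of_notMem (fun heX ↦ heX.elim he₁ he₂) ((hS.subset hX₁S).union (hS.subset hX₂S))]
    at hunion
  have hinter := H (X₁ ∩ X₂) (inter_subset_left.trans (hX₁S.trans (subset_insert e S)))
  have hcard := ncard_union_add_ncard_inter X₁ X₂ (hS.subset hX₁S) (hS.subset hX₂S)
  omega

theorem exists_split_of_forall_le (hg : IsSubmodular g) (hh : IsSubmodular h) {S : Set α}
    (hS : S.Finite) {k : ℕ} (H : ∀ X ⊆ S, k + X.ncard ≤ g X + h X) :
    ∃ C ⊆ S, k + S.ncard ≤ g C + h (S \ C) := by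
  induction S, hS using Set.Finite.induction_on generalizing g h k with
  | empty => exact ⟨∅, Subset.rfl, by simpa using H ∅ Subset.rfl⟩
  | @insert e S he hS ih =>
    rw [ncard_insert_of_notMem he hS, ← add_assoc, add_right_comm]
    rcases hg.forall_le_insert_left_or_right hh hS he H with hleft | hright
    · obtain ⟨C, hCS, hC⟩ := ih (hg.comp_insert e) hh hleft
      refine ⟨insert e C, insert_subset_insert hCS, ?_⟩
      rwa [insert_sdiff_of_mem S (mem_insert e C), sdiff_insert_of_notMem he]
    · obtain ⟨C, hCS, hC⟩ := ih hg (hh.comp_insert e) hright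
      refine ⟨C, hCS.trans (subset_insert e S), ?_⟩
      rwa [insert_sdiff_of_notMem S fun heC ↦ he (hCS heC)]

end IsSubmodular

namespace Matroid

variable {M : Matroid α} {B I X Y : Set α}

/-- Junk value `0` on sets of infinite rank, hence `[M.RankFinite]` from here on. -/
noncomputable def rk (M : Matroid α) (X : Set α) : ℕ :=
  (M.eRk X).toNat

variable [M.RankFinite]

lemma cast_rk_eq (X : Set α) : (M.rk X : ℕ∞) = M.eRk X :=
  ENat.natCast_toNat (eRk_ne_top_iff.2 (M.isRkFinite_set X))

lemma isSubmodular_rk (M : Matroid α) [M.RankFinite] : IsSubmodular M.rk := fun X Y ↦ by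
  have h := M.eRk_inter_add_eRk_union_le X Y
  rw [← cast_rk_eq, ← cast_rk_eq, ← cast_rk_eq, ← cast_rk_eq] at h
  exact_mod_cast h

lemma rk_mono (hXY : X ⊆ Y) : M.rk X ≤ M.rk Y := by
  have h := M.eRk_mono hXY
  rw [← cast_rk_eq, ← cast_rk_eq] at h
  exact_mod_cast h

lemma rk_le_ncard (hX : X.Finite) : M.rk X ≤ X.ncard := by
  have h := M.eRk_le_encard X
  rw [← cast_rk_eq, ← hX.cast_ncard_eq] at h
  exact_mod_cast h

lemma Indep.rk_eq_ncard (hI : M.Indep I) : M.rk I = I.ncard := by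
  have h := hI.eRk_eq_encard
  rw [← cast_rk_eq, ← hI.finite.cast_ncard_eq] at h
  exact_mod_cast h

lemma IsBase.rk_le_ncard (hB : M.IsBase B) (X : Set α) : M.rk X ≤ B.ncard := by
  have h := M.eRk_le_eRank X
  rw [← cast_rk_eq, ← hB.encard_eq_eRank, ← hB.finite.cast_ncard_eq] at h
  exact_mod_cast h

lemma IsBase.isBase_of_ncard_le_rk (hB : M.IsBase B) (hX : X.Finite) (hXB : X.ncard ≤ B.ncard)
    (hBX : B.ncard ≤ M.rk X) : M.IsBase X := by
  have hrk : M.rk X = X.ncard := le_antisymm (Matroid.rk_le_ncard hX) (hXB.trans hBX)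
  have hXi : M.Indep X := by
    rw [indep_iff_eRk_eq_encard_of_finite hX, ← cast_rk_eq, hrk, hX.cast_ncard_eq]
  refine hXi.isBase_of_eRk_ge hX ?_
  rw [← hB.encard_eq_eRank, ← hB.finite.cast_ncard_eq, ← cast_rk_eq]
  exact_mod_cast hBX

lemma IsBase.isBase_and_isBase_of_ncard_add_ncard_le (hB : M.IsBase B) (hX : X.Finite)
    (hY : Y.Finite) (hcard : X.ncard + Y.ncard ≤ 2 * B.ncard)
    (hrk : 2 * B.ncard ≤ M.rk X + M.rk Y) : M.IsBase X ∧ M.IsBase Y := by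
  have := Matroid.rk_le_ncard (M := M) hX
  have := Matroid.rk_le_ncard (M := M) hY
  have := hB.rk_le_ncard X
  have := hB.rk_le_ncard Y
  exact ⟨hB.isBase_of_ncard_le_rk hX (by omega) (by omega),
    hB.isBase_of_ncard_le_rk hY (by omega) (by omega)⟩

lemma Indep.ncard_add_ncard_le_rk_union_add_rk_union (hB : M.Indep B) (hI : M.Indep I)
    (A : Set α) : B.ncard + I.ncard ≤ M.rk (A ∪ I) + M.rk ((B \ A) ∪ I) := by
  have hsub := M.isSubmodular_rk (A ∪ I) ((B \ A) ∪ I)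
  have hI_le : M.rk I ≤ M.rk ((A ∪ I) ∩ ((B \ A) ∪ I)) :=
    rk_mono (subset_inter subset_union_right subset_union_right)
  have hB_le : M.rk B ≤ M.rk ((A ∪ I) ∪ ((B \ A) ∪ I)) :=
    rk_mono fun x hx ↦ by by_cases hxA : x ∈ A <;> simp [hx, hxA]
  rw [hB.rk_eq_ncard] at hB_le
  rw [hI.rk_eq_ncard] at hI_le
  omega

end Matroid

end

/-- Multiple symmetric exchange property: for bases `B₁, B₂` of a matroid and any
`A₁ ⊆ B₁` there is `A₂ ⊆ B₂` such that `(B₁ \ A₁) ∪ A₂` and `(B₂ \ A₂) ∪ A₁`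
are both bases. -/
theorem multiple_symmetric_exchange {α : Type*} (M : Matroid α) (hfin : M.E.Finite)
    (B₁ B₂ : Set α) (hB₁ : M.IsBase B₁) (hB₂ : M.IsBase B₂)
    (A₁ : Set α) (hA₁ : A₁ ⊆ B₁) :
    ∃ A₂ ⊆ B₂, M.IsBase ((B₁ \ A₁) ∪ A₂) ∧ M.IsBase ((B₂ \ A₂) ∪ A₁) := by
  have : M.Finite := ⟨hfin⟩
  obtain ⟨C, hCB₂, hC⟩ := (M.isSubmodular_rk.comp_union_left A₁).exists_split_of_forall_le
    (M.isSubmodular_rk.comp_union_left (B₁ \ A₁)) hB₂.finite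
    fun X hX ↦ hB₁.indep.ncard_add_ncard_le_rk_union_add_rk_union (hB₂.indep.subset hX) A₁
  have hcard : ((B₁ \ A₁) ∪ (B₂ \ C)).ncard + (A₁ ∪ C).ncard ≤ B₁.ncard + B₂.ncard := by
    have := ncard_union_le A₁ C
    have := ncard_union_le (B₁ \ A₁) (B₂ \ C)
    have := ncard_sdiff_add_ncard_of_subset hA₁ hB₁.finite
    have := ncard_sdiff_add_ncard_of_subset hCB₂ hB₂.finite
    omega
  have hB₂B₁ := hB₂.ncard_eq_ncard_of_isBase hB₁
  refine ⟨B₂ \ C, sdiff_subset, ?_⟩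
  rw [sdiff_sdiff_cancel_left hCB₂, union_comm C]
  exact hB₁.isBase_and_isBase_of_ncard_add_ncard_le (hB₁.finite.sdiff.union hB₂.finite.sdiff)
    ((hB₁.finite.subset hA₁).union (hB₂.finite.subset hCB₂)) (by omega) (by omega)
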